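/- Let G be a multitree with chain structure n, w_0 an admissible multidegree, and (w_v)_v a tight tuple in the twist-orbit V(G(w_0)). Then for every vertex v, the admissible multidegree w_v is obtained from the v-reduced multidegree w_v^red by a sequence of twists at vertices in V(G) \ {v} only. Consequently the divisor D_v := D^v_{w_v^red, w_v} on the component Z_v (recording the local effect at v of twisting from w_v^red to w_v) is effective. -/

import Mathlib

/-!
Twisting once at each vertex of a set `S` has a closed form depending only on `S`; hence twists
commute, the twist at all vertices is the identity, and the negative twist at `u` is the twist
at all other vertices. So `w_v` is obtained from `w_v^red` by twists at the vertices of a list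
`l` missing some vertex. If `v` occurred in `l`, go along the order witnessing that `w_v` is
concentrated on `v` up to the first vertex `x` missing from `l`: the negative twists at the
earlier vertices undo part of `l`, and what is left of `l` are twists away from `x`, which do not
lower the degree at `x`. So the degree at `x` would be both negative and at least
`w_v^red(x) ≥ 0`.
-/

open Finset

/-- An admissible multidegree on a graph with vertex set `V`, edge set `E` and
chain structure `n`. -/
structure AdmDeg (V E : Type*) (n : E → ℕ) where
  wG : V → ℤ
  mu : (e : E) → ZMod (n e)

variable {V E : Type*} [Fintype V] [Fintype E] [DecidableEq V] [DecidableEq E]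

/-- The total degree of an admissible multidegree. -/
def AdmDeg.degree (n : E → ℕ) (w : AdmDeg V E n) : ℤ :=
  ((univ.filter fun e => w.mu e ≠ 0).card : ℤ) + ∑ v, w.wG v

/-- The twist of an admissible multidegree at a vertex `v` (the graph is oriented by
`tail`/`head`, and `σ(e,v) = 1` if `v` is the tail of `e`, `-1` if it is the head).
For each edge `e` incident to `v`: if `μ(e) + σ(e,v) = 0` the other endpoint gains a chip;
if `μ(e) = 0` then `v` loses a chip; and `μ(e)` is replaced by `μ(e) + σ(e,v)`. -/
def twist (tail head : E → V) (n : E → ℕ) (v : V) (w : AdmDeg V E n) : AdmDeg V E n where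
  wG := fun u => w.wG u
    + ((univ.filter fun e => tail e = v ∧ head e = u ∧ w.mu e + 1 = 0).card : ℤ)
    + ((univ.filter fun e => head e = v ∧ tail e = u ∧ w.mu e - 1 = 0).card : ℤ)
    - (if u = v then
        ((univ.filter fun e => (tail e = v ∨ head e = v) ∧ w.mu e = 0).card : ℤ) else 0)
  mu := fun e =>
    if tail e = v then w.mu e + 1 else if head e = v then w.mu e - 1 else w.mu e

/-- The negative twist at `v`: the inverse of the twist at `v`. -/
def negTwist (tail head : E → V) (n : E → ℕ) (v : V) (w : AdmDeg V E n) : AdmDeg V E n where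
  wG := fun u => w.wG u
    - ((univ.filter fun e =>
        ((tail e = v ∧ head e = u) ∨ (head e = v ∧ tail e = u)) ∧ w.mu e = 0).card : ℤ)
    + (if u = v then
        ((univ.filter fun e =>
          (tail e = v ∧ w.mu e = 1) ∨ (head e = v ∧ w.mu e = -1)).card : ℤ) else 0)
  mu := fun e =>
    if tail e = v then w.mu e - 1 else if head e = v then w.mu e + 1 else w.mu e

/-- `w` is concentrated on `v`: there is an ordering of the vertices starting at `v`
such that each subsequent vertex has negative coefficient after performing the negative
twists at all previous vertices. -/
def Concentrated (tail head : E → V) (n : E → ℕ) (w : AdmDeg V E n) (v : V) : Prop :=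
  ∃ l : List V, l.Nodup ∧ (∀ u, u ∈ l) ∧ l.head? = some v ∧
    ∀ (i : ℕ) (hi : i < l.length), 0 < i →
      ((l.take i).foldl (fun a u => negTwist tail head n u a) w).wG (l.get ⟨i, hi⟩) < 0

/-- `w` lies in the twist-orbit `G(w₀)` of `w₀`. -/
def InOrbit (tail head : E → V) (n : E → ℕ) (w0 w : AdmDeg V E n) : Prop :=
  Relation.ReflTransGen (fun a b => ∃ v, b = twist tail head n v a) w0 w

/-- The simple graph `Ḡ` obtained from `G` by collapsing parallel edges. -/
def collapse (tail head : E → V) : SimpleGraph V :=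
  SimpleGraph.fromRel fun u u' => ∃ e, tail e = u ∧ head e = u'

/-- The partial twist of `w` at `(e, a)` for a multitree, where `e` is the edge of `Ḡ`
joining `a` to `b`: the twist operations of the twist at `a` are performed only on the
edges of `G` lying over `e`, i.e. on the edges joining `a` and `b`. -/
def ptwist (tail head : E → V) (n : E → ℕ) (a b : V) (w : AdmDeg V E n) :
    AdmDeg V E n where
  wG := fun u => w.wG u
    + (if u = b then
        ((univ.filter fun e =>
          (tail e = a ∧ head e = b ∧ w.mu e + 1 = 0) ∨
          (tail e = b ∧ head e = a ∧ w.mu e - 1 = 0)).card : ℤ) else 0)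
    - (if u = a then
        ((univ.filter fun e =>
          ((tail e = a ∧ head e = b) ∨ (tail e = b ∧ head e = a)) ∧ w.mu e = 0).card : ℤ)
       else 0)
  mu := fun e =>
    if tail e = a ∧ head e = b then w.mu e + 1
    else if tail e = b ∧ head e = a then w.mu e - 1
    else w.mu e

/-- The divisor `D^v_{w,w'}` on the component `Z_v` determined by a path of twists
(at the listed vertices, in order) starting at `w`, recorded as a multiplicity function
on the edges of `G` incident to `v` (the value at `e'` is the coefficient of the marked
point `P_{e'}^v`): a twist at a neighbour `u` of `v` adds `P_{e'}^v` for every edge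
`e'` between `u` and `v` whose new `μ`-value is `0`, while a twist at `v` itself
removes `P_{e'}^v` for every edge `e'` incident to `v` with `μ(e') = 0`. -/
def pathDiv (tail head : E → V) (n : E → ℕ) (v : V) :
    List V → AdmDeg V E n → E → ℤ
  | [], _ => fun _ => 0
  | u :: l, a => fun e =>
      ((if u ≠ v ∧ ((tail e = u ∧ head e = v) ∨ (tail e = v ∧ head e = u)) ∧
            (if tail e = u then a.mu e + 1 else a.mu e - 1) = 0 then 1 else 0) -
        (if u = v ∧ (tail e = v ∨ head e = v) ∧ a.mu e = 0 then 1 else 0)) +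
      pathDiv tail head n v l (twist tail head n u a) e

omit [Fintype V] [Fintype E] [DecidableEq V] [DecidableEq E] in
theorem AdmDeg.ext {n : E → ℕ} {w w' : AdmDeg V E n} (hwG : ∀ x, w.wG x = w'.wG x)
    (hmu : ∀ e, w.mu e = w'.mu e) : w = w' := by
  cases w; cases w'
  simp only [AdmDeg.mk.injEq]
  exact ⟨funext hwG, funext hmu⟩

section Twists

omit [DecidableEq E]

variable (tail head : E → V) (n : E → ℕ)

section

omit [Fintype V]

def twistEdgeDelta (v : V) (w : AdmDeg V E n) (x : V) (e : E) : ℤ :=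
  (if tail e = v ∧ head e = x ∧ w.mu e + 1 = 0 then 1 else 0)
  + (if head e = v ∧ tail e = x ∧ w.mu e - 1 = 0 then 1 else 0)
  - (if x = v ∧ (tail e = v ∨ head e = v) ∧ w.mu e = 0 then 1 else 0)

def negTwistEdgeDelta (v : V) (w : AdmDeg V E n) (x : V) (e : E) : ℤ :=
  (if x = v ∧ ((tail e = v ∧ w.mu e = 1) ∨ (head e = v ∧ w.mu e = -1)) then 1 else 0)
  - (if ((tail e = v ∧ head e = x) ∨ (head e = v ∧ tail e = x)) ∧ w.mu e = 0 then 1 else 0)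

theorem twist_wG (v : V) (w : AdmDeg V E n) (x : V) :
    (twist tail head n v w).wG x = w.wG x + ∑ e, twistEdgeDelta tail head n v w x e := by
  simp only [twist, twistEdgeDelta, card_filter, sum_add_distrib, sum_sub_distrib]
  push_cast
  rcases eq_or_ne x v with h | h <;> simp [h] <;> ring

theorem negTwist_wG (v : V) (w : AdmDeg V E n) (x : V) :
    (negTwist tail head n v w).wG x = w.wG x + ∑ e, negTwistEdgeDelta tail head n v w x e := by
  simp only [negTwist, negTwistEdgeDelta, card_filter, sum_sub_distrib]
  push_cast
  rcases eq_or_ne x v with h | h <;> simp [h] <;> ring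

theorem twist_negTwist (hloop : ∀ e, tail e ≠ head e) (v : V) (w : AdmDeg V E n) :
    twist tail head n v (negTwist tail head n v w) = w := by
  refine AdmDeg.ext (fun x => ?_) (fun e => ?_)
  · rw [twist_wG, negTwist_wG, add_assoc, ← sum_add_distrib, add_eq_left]
    refine sum_eq_zero fun e _ => ?_
    simp only [twistEdgeDelta, negTwistEdgeDelta, negTwist]
    by_cases ht : tail e = v
    · have hh : head e ≠ v := fun hh => hloop e (ht.trans hh.symm)
      simp [ht, hh, eq_comm (a := v), sub_eq_zero]
    · by_cases hh : head e = v <;> simp [ht, hh, eq_comm (a := v), add_eq_zero_iff_eq_neg]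
  · have := hloop e
    simp only [twist, negTwist]
    by_cases h1 : tail e = v <;> by_cases h2 : head e = v <;> simp_all

theorem le_twist_wG {u x : V} (hx : x ≠ u) (w : AdmDeg V E n) :
    w.wG x ≤ (twist tail head n u w).wG x := by
  simp only [twist, if_neg hx, sub_zero]
  omega

/- `twistSet S` is the result of twisting once at each vertex of `S`, in any order
(`twistList_eq_twistSet`): only the edges leaving `S` are affected. -/
def twistSetEdgeDelta (S : Finset V) (w : AdmDeg V E n) (x : V) (e : E) : ℤ :=
  (if tail e ∈ S ∧ head e ∉ S ∧ head e = x ∧ w.mu e + 1 = 0 then 1 else 0)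
  - (if tail e ∈ S ∧ head e ∉ S ∧ tail e = x ∧ w.mu e = 0 then 1 else 0)
  + (if head e ∈ S ∧ tail e ∉ S ∧ tail e = x ∧ w.mu e - 1 = 0 then 1 else 0)
  - (if head e ∈ S ∧ tail e ∉ S ∧ head e = x ∧ w.mu e = 0 then 1 else 0)

def twistSet (S : Finset V) (w : AdmDeg V E n) : AdmDeg V E n where
  wG x := w.wG x + ∑ e, twistSetEdgeDelta tail head n S w x e
  mu e := w.mu e + (if tail e ∈ S then 1 else 0) - (if head e ∈ S then 1 else 0)

theorem twistSet_empty (w : AdmDeg V E n) : twistSet tail head n ∅ w = w :=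
  AdmDeg.ext (by simp [twistSet, twistSetEdgeDelta]) (by simp [twistSet])

theorem twist_twistSet (hloop : ∀ e, tail e ≠ head e) {S : Finset V} {v : V} (hv : v ∉ S)
    (w : AdmDeg V E n) :
    twist tail head n v (twistSet tail head n S w) = twistSet tail head n (insert v S) w := by
  refine AdmDeg.ext (fun x => ?_) (fun e => ?_)
  · rw [twist_wG]
    change w.wG x + _ + _ = w.wG x + _
    rw [add_assoc, ← sum_add_distrib]
    refine congrArg _ (sum_congr rfl fun e _ => ?_)
    simp only [twistEdgeDelta, twistSetEdgeDelta, twistSet, mem_insert]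
    by_cases ht : tail e = v
    · have hh : head e ≠ v := fun hh => hloop e (ht.trans hh.symm)
      subst ht
      by_cases hS : head e ∈ S <;> simp [hh, hv, hS, eq_comm (a := tail e), sub_eq_zero]
    · by_cases hh : head e = v
      · subst hh
        by_cases hS : tail e ∈ S <;>
          simp [ht, hv, hS, eq_comm (a := head e), add_eq_zero_iff_eq_neg]
      · simp [ht, hh]
  · simp only [twist, twistSet, mem_insert]
    by_cases ht : tail e = v
    · have hh : head e ≠ v := fun hh => hloop e (ht.trans hh.symm)
      simp [ht, hh, hv]
      ring
    · by_cases hh : head e = v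
      · simp [ht, hh, hv]
      · simp [ht, hh]

def twistList (l : List V) (w : AdmDeg V E n) : AdmDeg V E n :=
  l.foldl (fun a u => twist tail head n u a) w

def negTwistList (l : List V) (w : AdmDeg V E n) : AdmDeg V E n :=
  l.foldl (fun a u => negTwist tail head n u a) w

@[simp]
theorem twistList_nil (w : AdmDeg V E n) : twistList tail head n [] w = w := rfl

@[simp]
theorem twistList_cons (u : V) (l : List V) (w : AdmDeg V E n) :
    twistList tail head n (u :: l) w = twistList tail head n l (twist tail head n u w) := rfl

theorem twistList_append (l l' : List V) (w : AdmDeg V E n) :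
    twistList tail head n (l ++ l') w = twistList tail head n l' (twistList tail head n l w) :=
  List.foldl_append

theorem twistList_eq_twistSet (hloop : ∀ e, tail e ≠ head e) {l : List V} (hl : l.Nodup)
    (w : AdmDeg V E n) : twistList tail head n l w = twistSet tail head n l.toFinset w := by
  induction l using List.reverseRecOn with
  | nil => simp [twistSet_empty]
  | append_singleton l v ih =>
    rw [List.nodup_append] at hl
    have hv : v ∉ l.toFinset := fun h => hl.2.2 v (List.mem_toFinset.mp h) v (by simp) rfl
    rw [twistList_append, twistList_cons, twistList_nil, ih hl.1,
      twist_twistSet tail head n hloop hv]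
    congr 1
    ext x
    simp

theorem twist_comm (hloop : ∀ e, tail e ≠ head e) (a b : V) (w : AdmDeg V E n) :
    twist tail head n a (twist tail head n b w) = twist tail head n b (twist tail head n a w) := by
  rcases eq_or_ne a b with rfl | hab
  · rfl
  · change twistList tail head n [b, a] w = twistList tail head n [a, b] w
    rw [twistList_eq_twistSet tail head n hloop (by simp [hab.symm]),
      twistList_eq_twistSet tail head n hloop (by simp [hab]), List.toFinset_cons,
      List.toFinset_cons, List.toFinset_cons, List.toFinset_cons, insert_comm]

theorem twistList_perm (hloop : ∀ e, tail e ≠ head e) {l₁ l₂ : List V} (h : l₁.Perm l₂)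
    (w : AdmDeg V E n) : twistList tail head n l₁ w = twistList tail head n l₂ w := by
  induction h generalizing w with
  | nil => rfl
  | cons x _ ih => exact ih _
  | swap x y l => simp only [twistList_cons, twist_comm tail head n hloop x y]
  | trans _ _ ih₁ ih₂ => rw [ih₁, ih₂]

theorem twistList_comm (hloop : ∀ e, tail e ≠ head e) (l l' : List V) (w : AdmDeg V E n) :
    twistList tail head n l (twistList tail head n l' w)
      = twistList tail head n l' (twistList tail head n l w) := by
  rw [← twistList_append, ← twistList_append,
    twistList_perm tail head n hloop List.perm_append_comm]

theorem le_twistList_wG {l : List V} {x : V} (hx : x ∉ l) (w : AdmDeg V E n) :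
    w.wG x ≤ (twistList tail head n l w).wG x := by
  induction l generalizing w with
  | nil => exact le_rfl
  | cons u l ih =>
    rw [List.mem_cons, not_or] at hx
    exact (le_twist_wG tail head n hx.1 w).trans (ih hx.2 _)

theorem pathDiv_nonneg {v : V} {l : List V} (hv : v ∉ l) (w : AdmDeg V E n) (e : E) :
    0 ≤ pathDiv tail head n v l w e := by
  induction l generalizing w with
  | nil => exact le_rfl
  | cons u l ih =>
    rw [List.mem_cons, not_or] at hv
    have := ih hv.2 (twist tail head n u w)
    simp only [pathDiv, Ne.symm hv.1, false_and, if_false]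
    split_ifs <;> omega

end

theorem twistSet_univ (w : AdmDeg V E n) : twistSet tail head n univ w = w :=
  AdmDeg.ext (by simp [twistSet, twistSetEdgeDelta]) (by simp [twistSet])

theorem twistList_eq_self (hloop : ∀ e, tail e ≠ head e) {l : List V} (hl : l.Nodup)
    (hfull : ∀ x, x ∈ l) (w : AdmDeg V E n) : twistList tail head n l w = w := by
  rw [twistList_eq_twistSet tail head n hloop hl,
    eq_univ_of_forall fun x => List.mem_toFinset.mpr (hfull x), twistSet_univ]

theorem twistList_erase_twist (hloop : ∀ e, tail e ≠ head e) (u : V) (w : AdmDeg V E n) :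
    twistList tail head n (univ.erase u).toList (twist tail head n u w) = w := by
  refine twistList_eq_self tail head n hloop (l := u :: (univ.erase u).toList) ?_ ?_ w
  · simp [nodup_toList]
  · intro x
    rcases eq_or_ne x u with rfl | hx <;> simp [*]

theorem negTwist_eq_twistList (hloop : ∀ e, tail e ≠ head e) (u : V) (w : AdmDeg V E n) :
    negTwist tail head n u w = twistList tail head n (univ.erase u).toList w := by
  conv_rhs => rw [← twist_negTwist tail head n hloop u w]
  rw [twistList_erase_twist tail head n hloop]

theorem negTwistList_eq_twistList (hloop : ∀ e, tail e ≠ head e) (l : List V)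
    (w : AdmDeg V E n) :
    negTwistList tail head n l w
      = twistList tail head n (l.flatMap fun u => (univ.erase u).toList) w := by
  induction l generalizing w with
  | nil => rfl
  | cons u l ih =>
    rw [List.flatMap_cons, twistList_append, ← negTwist_eq_twistList tail head n hloop]
    exact ih _

theorem negTwistList_twistList (hloop : ∀ e, tail e ≠ head e) (l : List V) (w : AdmDeg V E n) :
    negTwistList tail head n l (twistList tail head n l w) = w := by
  induction l generalizing w with
  | nil => rfl
  | cons u l ih =>
    change negTwistList tail head n l (negTwist tail head n u (twistList tail head n l _)) = w
    rw [negTwist_eq_twistList tail head n hloop, twistList_comm tail head n hloop,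
      twistList_erase_twist tail head n hloop, ih]

end Twists

section Orbits

omit [DecidableEq E]

variable {tail head : E → V} {n : E → ℕ}

omit [Fintype V] in
theorem InOrbit.exists_twistList {w₀ w : AdmDeg V E n} (h : InOrbit tail head n w₀ w) :
    ∃ l, twistList tail head n l w₀ = w := by
  induction h with
  | refl => exact ⟨[], rfl⟩
  | tail _ hstep ih =>
    obtain ⟨l, rfl⟩ := ih
    obtain ⟨u, rfl⟩ := hstep
    exact ⟨l ++ [u], twistList_append tail head n l [u] w₀⟩

theorem exists_twistList_of_inOrbit (hloop : ∀ e, tail e ≠ head e) {w₀ a b : AdmDeg V E n}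
    (ha : InOrbit tail head n w₀ a) (hb : InOrbit tail head n w₀ b) :
    ∃ l, twistList tail head n l a = b := by
  obtain ⟨la, rfl⟩ := ha.exists_twistList
  obtain ⟨lb, rfl⟩ := hb.exists_twistList
  refine ⟨la.flatMap (fun u => (univ.erase u).toList) ++ lb, ?_⟩
  rw [twistList_append, ← negTwistList_eq_twistList tail head n hloop,
    negTwistList_twistList tail head n hloop]

theorem exists_notMem_twistList_eq [Nonempty V] (hloop : ∀ e, tail e ≠ head e)
    (l : List V) :
    ∃ l', (∃ u, u ∉ l') ∧ twistList tail head n l' = twistList tail head n l := by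
  induction hlen : l.length using Nat.strong_induction_on generalizing l with
  | _ k ih =>
    by_cases hfull : ∀ u, u ∈ l
    swap
    · exact ⟨l, not_forall.mp hfull, rfl⟩
    have hsub : (univ : Finset V).toList.Subperm l :=
      (nodup_toList _).subperm fun x _ => hfull x
    have hperm := List.subperm_append_diff_self_of_count_le (List.subperm_ext_iff.mp hsub)
    have hshorter : (l.diff univ.toList).length < k := by
      rw [← hlen, ← hperm.length_eq, List.length_append, length_toList]
      have := card_pos.mpr (univ_nonempty (α := V))
      omega
    obtain ⟨l', hmiss', heq⟩ := ih _ hshorter _ rfl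
    refine ⟨l', hmiss', funext fun w => ?_⟩
    rw [heq, ← twistList_perm tail head n hloop hperm, twistList_append,
      twistList_eq_self tail head n hloop (nodup_toList _) fun x => mem_toList.mpr (mem_univ x)]

theorem notMem_of_twistList_eq_of_concentrated (hloop : ∀ e, tail e ≠ head e) {v u₀ : V}
    {l : List V} {w w' : AdmDeg V E n}
    (hconc : Concentrated tail head n w' v) (hnonneg : ∀ x, x ≠ v → 0 ≤ w.wG x)
    (hl : twistList tail head n l w = w') (hu₀ : u₀ ∉ l) : v ∉ l := by
  intro hv
  obtain ⟨order, hnd, hfull, hhead, hneg⟩ := hconc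
  obtain ⟨t, rfl⟩ : ∃ t, order = v :: t := ⟨order.tail, List.eq_cons_of_mem_head? hhead⟩
  set i := (v :: t).findIdx fun x => decide (x ∉ l)
  have hi : i < (v :: t).length :=
    List.findIdx_lt_length.mpr ⟨u₀, hfull u₀, by simpa using hu₀⟩
  have hx : (v :: t)[i] ∉ l := by simpa [i] using List.findIdx_getElem (w := hi)
  have hxv : (v :: t)[i] ≠ v := fun h => hx (by rwa [h])
  have hipos : 0 < i := by
    refine Nat.pos_of_ne_zero fun h0 => hxv ?_
    simp [h0]
  set P := (v :: t).take i
  have hPl : P ⊆ l := fun y hy => by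
    obtain ⟨j, hj, rfl⟩ := List.mem_take_iff_getElem.mp hy
    simpa using List.not_of_lt_findIdx (lt_of_lt_of_le hj (min_le_left _ _))
  have hperm := List.subperm_append_diff_self_of_count_le
    (List.subperm_ext_iff.mp ((hnd.sublist (List.take_sublist _ _)).subperm hPl))
  have hw' : w' = twistList tail head n P (twistList tail head n (l.diff P) w) := by
    rw [← hl, ← twistList_perm tail head n hloop hperm, twistList_append,
      twistList_comm tail head n hloop]
  have hneg_at := hneg i hi hipos
  have hnonneg_at : 0 ≤ (negTwistList tail head n P w').wG (v :: t)[i] := by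
    rw [hw', negTwistList_twistList tail head n hloop]
    exact (hnonneg _ hxv).trans
      (le_twistList_wG tail head n (fun h => hx (List.diff_subset _ _ h)) w)
  exact (not_lt.mpr hnonneg_at) hneg_at

end Orbits

theorem tight_tuple_from_reduced_general (tail head : E → V)
    (hloopless : ∀ e, tail e ≠ head e) (n : E → ℕ)
    (w0 : AdmDeg V E n) (w wred : V → AdmDeg V E n)
    (horb : ∀ u, InOrbit tail head n w0 (w u))
    (hconc : ∀ u, Concentrated tail head n (w u) u)
    (horbred : ∀ u, InOrbit tail head n w0 (wred u))
    (hnonneg : ∀ u x, x ≠ u → 0 ≤ (wred u).wG x) :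
    ∀ v : V, ∃ l : List V, v ∉ l ∧
      l.foldl (fun a u => twist tail head n u a) (wred v) = w v ∧
      ∀ e : E, 0 ≤ pathDiv tail head n v l (wred v) e := by
  intro v
  have : Nonempty V := ⟨v⟩
  obtain ⟨l₀, hl₀⟩ := exists_twistList_of_inOrbit hloopless (horbred v) (horb v)
  obtain ⟨l, ⟨u₀, hu₀⟩, hl⟩ := exists_notMem_twistList_eq (n := n) hloopless l₀
  have hreach : twistList tail head n l (wred v) = w v := by rw [hl, hl₀]
  have hv : v ∉ l :=
    notMem_of_twistList_eq_of_concentrated hloopless (hconc v) (hnonneg v) hreach hu₀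
  exact ⟨l, hv, hreach, pathDiv_nonneg tail head n hv (wred v)⟩

/-- for a tight tuple `(w_v)` in the twist-orbit of `w₀` on a multitree,
each `w_v` is obtained from the `v`-reduced multidegree `w_v^red` (the element of the
orbit concentrated on `v` and nonnegative away from `v`) by a sequence of twists at
vertices different from `v` only; consequently the divisor `D_v = D^v_{w_v^red, w_v}`
on `Z_v` is effective. -/
theorem tight_tuple_from_reduced (tail head : E → V)
    (hloopless : ∀ e, tail e ≠ head e) (n : E → ℕ) (hn : ∀ e, 0 < n e)
    (htree : (collapse tail head).IsTree)
    (w0 : AdmDeg V E n) (w wred : V → AdmDeg V E n)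
    (horb : ∀ u, InOrbit tail head n w0 (w u))
    (hconc : ∀ u, Concentrated tail head n (w u) u)
    (htight : ∀ a b : V,
      (∃ e, (tail e = a ∧ head e = b) ∨ (tail e = b ∧ head e = a)) →
      ∃ k : ℕ, w a = (fun x => ptwist tail head n b a x)^[k] (w b))
    (horbred : ∀ u, InOrbit tail head n w0 (wred u))
    (hconcred : ∀ u, Concentrated tail head n (wred u) u)
    (hnonneg : ∀ u x, x ≠ u → 0 ≤ (wred u).wG x) :
    ∀ v : V, ∃ l : List V, v ∉ l ∧
      l.foldl (fun a u => twist tail head n u a) (wred v) = w v ∧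
      ∀ e : E, 0 ≤ pathDiv tail head n v l (wred v) e :=
  tight_tuple_from_reduced_general tail head hloopless n w0 w wred horb hconc horbred hnonneg
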